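/- Let F be an algebraically closed field of characteristic different from 2. Let (A, B) and (A', B') be pairs of n×n matrices over F such that A and A' are both symmetric or both skew-symmetric, and B and B' are both symmetric or both skew-symmetric. If there exist nonsingular matrices R, S with Rᵀ·A·S = A' and Rᵀ·B·S = B' (i.e., the pairs are equivalent), then there exists a nonsingular matrix N with Nᵀ·A·N = A' and Nᵀ·B·N = B' (i.e., the pairs are congruent). -/

import Mathlib

/-!
Put `M = S * R⁻¹`. Since `A'` and `B'` have the same symmetry type as `A` and `B`, transposing
`Rᵀ * A * S = A'` gives `Sᵀ * A * R = A'`, i.e. `A * M = Mᵀ * A`, and likewise for `B`; this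
relation passes from `M` to every polynomial in `M`. As `M` is invertible and the field is
algebraically closed of characteristic `≠ 2`, `M = P ^ 2` for a polynomial `P` in `M`: interpolate
square roots of the eigenvalues and refine by Newton's iteration modulo the characteristic
polynomial. Then `N = P * R` gives `Nᵀ * A * N = Rᵀ * A * P ^ 2 * R = Rᵀ * A * S = A'`.
-/

open Matrix Polynomial

theorem exists_sq_eq_of_isNilpotent_sub_sq {R : Type*} [CommRing R] (h2 : IsUnit (2 : R))
    {u b : R} (hu : IsUnit u) (hb : IsNilpotent (b ^ 2 - u)) : ∃ x, x ^ 2 = u := by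
  suffices newton : ∀ k : ℕ, ∀ b : R, (b ^ 2 - u) ^ 2 ^ k = 0 → ∃ x, x ^ 2 = u by
    obtain ⟨m, hm⟩ := hb
    exact newton m b (pow_eq_zero_of_le Nat.lt_two_pow_self.le hm)
  intro k
  induction k with
  | zero => exact fun b hb => ⟨b, sub_eq_zero.mp (by simpa using hb)⟩
  | succ k ih =>
    intro b hb
    set e := b ^ 2 - u
    have hbu : IsUnit b := by
      have : IsUnit (u + e) := IsNilpotent.isUnit_add_left_of_commute ⟨_, hb⟩ hu (.all _ _)
      rwa [add_sub_cancel, isUnit_pow_iff two_ne_zero] at this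
    obtain ⟨c, hc⟩ := (h2.mul hbu).exists_right_inv
    -- one Newton step `b ↦ b - e / (2b)` squares the error
    have hstep : (b - e * c) ^ 2 - u = (e * c) ^ 2 := by linear_combination (-e) * hc
    refine ih (b - e * c) ?_
    rw [hstep, ← pow_mul, ← pow_succ', mul_pow, hb, zero_mul]

theorem Polynomial.dvd_pow_natDegree_of_forall_isRoot {k : Type*} [Field k] [IsAlgClosed k]
    {p q : k[X]} (hp : p ≠ 0) (h : ∀ a, p.IsRoot a → q.IsRoot a) : p ∣ q ^ p.natDegree := by
  classical
  rcases eq_or_ne q 0 with rfl | hq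
  · rcases Nat.eq_zero_or_pos p.natDegree with hdeg | hdeg
    · obtain ⟨c, rfl⟩ := natDegree_eq_zero.mp hdeg
      exact (isUnit_C.mpr (isUnit_iff_ne_zero.mpr (C_ne_zero.mp hp))).dvd
    · rw [zero_pow hdeg.ne']
      exact dvd_zero p
  rw [IsAlgClosed.dvd_iff_roots_le_roots hp (pow_ne_zero _ hq), roots_pow, Multiset.le_iff_count]
  intro a
  rw [Multiset.count_nsmul]
  by_cases ha : a ∈ p.roots
  · have hqa : 1 ≤ q.roots.count a :=
      Multiset.one_le_count_iff_mem.mpr ((mem_roots hq).mpr (h a ((mem_roots hp).mp ha)))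
    calc p.roots.count a ≤ Multiset.card p.roots := Multiset.count_le_card _ _
      _ ≤ p.natDegree := card_roots' p
      _ ≤ p.natDegree * q.roots.count a := Nat.le_mul_of_pos_right _ hqa
  · simp [Multiset.count_eq_zero.mpr ha]

theorem Polynomial.exists_dvd_sq_sub_X {F : Type*} [Field F] [IsAlgClosed F] (h2 : (2 : F) ≠ 0)
    {p : F[X]} (hp : p.coeff 0 ≠ 0) : ∃ s : F[X], p ∣ s ^ 2 - X := by
  classical
  have hp0 : p ≠ 0 := by rintro rfl; exact hp (coeff_zero 0)
  choose μ hμ using fun a : F => IsAlgClosed.exists_pow_nat_eq a two_pos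
  -- `g` takes a square root of each root of `p` at that root, so `g ^ 2 - X` vanishes on them
  set g := Lagrange.interpolate p.roots.toFinset id μ
  have hg : ∀ a, p.IsRoot a → (g ^ 2 - X).IsRoot a := by
    intro a ha
    have hga : g.eval a = μ a := Lagrange.eval_interpolate_at_node (v := id) μ (Set.injOn_id _)
      (Multiset.mem_toFinset.mpr ((mem_roots hp0).mpr ha))
    simp [IsRoot, hga, hμ]
  have hroot : IsUnit (AdjoinRoot.root p) := by
    have hcop : IsCoprime X p :=
      (irreducible_X.coprime_iff_not_dvd).mpr (by rwa [X_dvd_iff])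
    obtain ⟨a, c, hac⟩ := hcop
    refine .of_mul_eq_one (AdjoinRoot.mk p a) ?_
    rw [← AdjoinRoot.mk_X, ← map_mul, ← map_one (AdjoinRoot.mk p), AdjoinRoot.mk_eq_mk]
    exact ⟨-c, by linear_combination hac⟩
  have h2' : IsUnit (2 : AdjoinRoot p) := by
    simpa only [map_ofNat] using (isUnit_iff_ne_zero.mpr h2).map (algebraMap F (AdjoinRoot p))
  have hnil : IsNilpotent (AdjoinRoot.mk p g ^ 2 - AdjoinRoot.root p) := by
    refine ⟨p.natDegree, ?_⟩
    rw [← AdjoinRoot.mk_X, ← map_pow, ← map_sub, ← map_pow, AdjoinRoot.mk_eq_zero]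
    exact dvd_pow_natDegree_of_forall_isRoot hp0 hg
  obtain ⟨x, hx⟩ := exists_sq_eq_of_isNilpotent_sub_sq h2' hroot hnil
  obtain ⟨s, rfl⟩ := AdjoinRoot.mk_surjective x
  refine ⟨s, AdjoinRoot.mk_eq_zero.mp ?_⟩
  rw [map_sub, map_pow, hx, AdjoinRoot.mk_X, sub_self]

theorem SemiconjBy.aeval {R A : Type*} [CommSemiring R] [Semiring A] [Algebra R A]
    {a x y : A} (h : SemiconjBy a x y) (p : R[X]) :
    SemiconjBy a (aeval x p) (aeval y p) := by
  induction p using Polynomial.induction_on' with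
  | add p q hp hq => simpa only [map_add] using hp.add_right hq
  | monomial n c =>
    simpa only [aeval_monomial, ← Algebra.smul_def] using (h.pow_right n).smul_right c

theorem Matrix.transpose_aeval {n R : Type*} [Fintype n] [DecidableEq n] [CommSemiring R]
    (M : Matrix n n R) (p : R[X]) : (aeval M p)ᵀ = aeval Mᵀ p := by
  induction p using Polynomial.induction_on' with
  | add p q hp hq => simp only [map_add, transpose_add, hp, hq]
  | monomial n c => simp only [aeval_monomial, ← Algebra.smul_def, transpose_smul, transpose_pow]

theorem Matrix.exists_aeval_sq_eq {n F : Type*} [Fintype n] [DecidableEq n] [Field F]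
    [IsAlgClosed F] (h2 : (2 : F) ≠ 0) {M : Matrix n n F} (hM : IsUnit M) :
    ∃ f : F[X], aeval M f ^ 2 = M := by
  have hcoeff : M.charpoly.coeff 0 ≠ 0 := by
    intro h
    have hdet := M.det_eq_sign_charpoly_coeff
    rw [h, mul_zero] at hdet
    exact ((isUnit_iff_isUnit_det M).mp hM).ne_zero hdet
  obtain ⟨s, q, hq⟩ := exists_dvd_sq_sub_X h2 hcoeff
  refine ⟨s, sub_eq_zero.mp ?_⟩
  simpa [aeval_self_charpoly] using congrArg (aeval M) hq

namespace Matrix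

variable {n K : Type*} [Fintype n] [CommRing K] {R S X X' : Matrix n n K}

theorem transpose_mul_mul_swap_of_symm_or_skew
    (hX : (Xᵀ = X ∧ X'ᵀ = X') ∨ (Xᵀ = -X ∧ X'ᵀ = -X')) (h : Rᵀ * X * S = X') :
    Sᵀ * X * R = X' := by
  have ht : X'ᵀ = Sᵀ * Xᵀ * R := by rw [← h, transpose_mul, transpose_mul, transpose_transpose,
    mul_assoc]
  rcases hX with ⟨hX, hX'⟩ | ⟨hX, hX'⟩
  · rw [← hX', ht, hX]
  · rw [← neg_neg X', ← hX', ht, hX, mul_neg, neg_mul, neg_neg]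

variable [DecidableEq n]

theorem transpose_mul_mul_eq_of_semiconjBy {P : Matrix n n K} (hP : SemiconjBy X P Pᵀ)
    (hPS : P ^ 2 * R = S) : (P * R)ᵀ * X * (P * R) = Rᵀ * X * S :=
  calc (P * R)ᵀ * X * (P * R) = Rᵀ * (Pᵀ * X) * P * R := by simp only [transpose_mul, mul_assoc]
    _ = Rᵀ * X * (P ^ 2 * R) := by simp only [← hP.eq, sq, mul_assoc]
    _ = Rᵀ * X * S := by rw [hPS]

theorem semiconjBy_mul_nonsing_inv (h : Rᵀ * X * S = Sᵀ * X * R) (hR : IsUnit R) :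
    SemiconjBy X (S * R⁻¹) (S * R⁻¹)ᵀ := by
  have hR' : IsUnit R.det := (isUnit_iff_isUnit_det R).mp hR
  have hRt : IsUnit Rᵀ.det := by rwa [det_transpose]
  rw [SemiconjBy, transpose_mul, transpose_nonsing_inv]
  calc X * (S * R⁻¹) = Rᵀ⁻¹ * (Rᵀ * X * S) * R⁻¹ := by
        simp only [mul_assoc, nonsing_inv_mul_cancel_left _ _ hRt]
    _ = Rᵀ⁻¹ * Sᵀ * X := by rw [h, mul_assoc, mul_nonsing_inv_cancel_right _ _ hR', mul_assoc]

end Matrix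

/-- Over an algebraically closed field of characteristic ≠ 2, equivalent pairs of
matrices, each of which is symmetric or skew-symmetric (matched in type), are congruent. -/
theorem stmt_5 (F : Type*) [Field F] [IsAlgClosed F] (hchar : ringChar F ≠ 2)
    (n : ℕ) (A B A' B' : Matrix (Fin n) (Fin n) F)
    (hA : (Aᵀ = A ∧ A'ᵀ = A') ∨ (Aᵀ = -A ∧ A'ᵀ = -A'))
    (hB : (Bᵀ = B ∧ B'ᵀ = B') ∨ (Bᵀ = -B ∧ B'ᵀ = -B'))
    (R S : Matrix (Fin n) (Fin n) F) (hR : IsUnit R) (hS : IsUnit S)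
    (hA' : Rᵀ * A * S = A') (hB' : Rᵀ * B * S = B') :
    ∃ N : Matrix (Fin n) (Fin n) F, IsUnit N ∧ Nᵀ * A * N = A' ∧ Nᵀ * B * N = B' := by
  set M := S * R⁻¹
  have hM : IsUnit M := hS.mul (isUnit_nonsing_inv_iff.mpr hR)
  obtain ⟨f, hf⟩ := exists_aeval_sq_eq (Ring.two_ne_zero hchar) hM
  set P := aeval M f
  have hPS : P ^ 2 * R = S := by
    rw [hf, nonsing_inv_mul_cancel_right _ _ ((isUnit_iff_isUnit_det R).mp hR)]
  have congr_of_equiv : ∀ {X X' : Matrix (Fin n) (Fin n) F},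
      (Xᵀ = X ∧ X'ᵀ = X') ∨ (Xᵀ = -X ∧ X'ᵀ = -X') →
      Rᵀ * X * S = X' → (P * R)ᵀ * X * (P * R) = X' := by
    intro X X' hX h
    have hXM : SemiconjBy X M Mᵀ :=
      semiconjBy_mul_nonsing_inv (h.trans (transpose_mul_mul_swap_of_symm_or_skew hX h).symm) hR
    have hP : SemiconjBy X P Pᵀ := by rw [transpose_aeval]; exact hXM.aeval f
    rw [transpose_mul_mul_eq_of_semiconjBy hP hPS, h]
  exact ⟨P * R, ((isUnit_pow_iff two_ne_zero).mp (hf ▸ hM)).mul hR,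
    congr_of_equiv hA hA', congr_of_equiv hB hB'⟩
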